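/- Fix a phase-space point z_* ∈ ℝ^{2n}, a real number λ, and orthonormal vectors u, v ∈ ℝ^n with L(z_*)u = λu and L(z_*)v = λv. Define smooth functions ξ, η : ℝ^{2n} → ℝ by ξ(z) = ½·(uᵀ L(z) u − vᵀ L(z) v) and η(z) = vᵀ L(z) u. Then the Poisson bracket {ξ, η} at z_* equals (1/n)·Σ_{m=1}^n b_m(z_*)·(u_{m+1} v_m − u_m v_{m+1}) (vector indices mod n), and this value is nonzero. In particular, ξ and η form a (rescaled) canonically conjugate pair transverse to the singular set at z_*. -/

import Mathlib

/-!
Both `ξ` and `η` are linear in the entries `p_r`, `b_r` of `L`, and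
`∂b_r/∂q = b_r (e_r - e_{r+1})/2`, so after a shift of the summation index the bracket becomes
`¼ Σ_j W_j (u_j² + u_{j+1}² + v_j² + v_{j+1}²)`, where `W_m = b_m (u_{m+1} v_m - u_m v_{m+1})`
is the discrete Wronskian of the three-term recurrence `L x = λ x`. For two eigenvectors with
the same eigenvalue `W` does not depend on `m`, so the normalisation of `u`, `v` gives `{ξ, η} = W`.
If `W` vanished, `u_m v - v_m u` would be an eigenvector vanishing at `m` and `m + 1`, hence zero
because `b > 0` lets the recurrence propagate; pairing with `u` would then give `v = 0`.
-/

open Matrix BigOperators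

noncomputable def bfun {n : ℕ} [NeZero n] (z : (Fin n → ℝ) × (Fin n → ℝ)) (j : Fin n) : ℝ :=
  Real.exp ((z.1 j - z.1 (j + 1)) / 2)

/-- The Lax matrix `L`. -/
noncomputable def Lax {n : ℕ} [NeZero n] (z : (Fin n → ℝ) × (Fin n → ℝ)) :
    Matrix (Fin n) (Fin n) ℝ := fun r s =>
  (if r = s then z.2 r else 0) + (if r + 1 = s then bfun z r else 0) +
    (if s + 1 = r then bfun z s else 0)

/-- The sign `σ_r`, equal to `-1` for the index corresponding to `b_n`. -/
noncomputable def sgn {n : ℕ} [NeZero n] (j : Fin n) : ℝ := if j + 1 = 0 then -1 else 1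

/-- The Lax matrix `L̄` obtained from `L` by `b_n ↦ -b_n`. -/
noncomputable def LaxBar {n : ℕ} [NeZero n] (z : (Fin n → ℝ) × (Fin n → ℝ)) :
    Matrix (Fin n) (Fin n) ℝ := fun r s =>
  (if r = s then z.2 r else 0) + (if r + 1 = s then sgn r * bfun z r else 0) +
    (if s + 1 = r then sgn s * bfun z s else 0)

/-- The canonical Poisson bracket on `ℝ^{2n}`. -/
noncomputable def pb {n : ℕ} (f g : (Fin n → ℝ) × (Fin n → ℝ) → ℝ)
    (z : (Fin n → ℝ) × (Fin n → ℝ)) : ℝ :=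
  ∑ j : Fin n,
    (fderiv ℝ f z (Pi.single j 1, 0) * fderiv ℝ g z (0, Pi.single j 1) -
     fderiv ℝ f z (0, Pi.single j 1) * fderiv ℝ g z (Pi.single j 1, 0))

/-- The integrals of motion `F_j = (1/j) Tr L^j`. -/
noncomputable def F {n : ℕ} [NeZero n] (j : ℕ) (z : (Fin n → ℝ) × (Fin n → ℝ)) : ℝ :=
  (1 / j : ℝ) * (Lax z ^ j).trace

/-- The map `F = (F_1, …, F_n) : ℝ^{2n} → ℝ^n`. -/
noncomputable def Fvec {n : ℕ} [NeZero n] (z : (Fin n → ℝ) × (Fin n → ℝ)) : Fin n → ℝ :=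
  fun j => F (j.val + 1) z

/-- The corank of `dF(z)`. -/
noncomputable def corank (n : ℕ) [NeZero n] (z : (Fin n → ℝ) × (Fin n → ℝ)) : ℕ :=
  n - Module.finrank ℝ (LinearMap.range (fderiv ℝ (Fvec (n := n)) z).toLinearMap)

/-- Number of (real) eigenvalues of `A` with two-dimensional eigenspace. -/
noncomputable def nuCount {n : ℕ} (A : Matrix (Fin n) (Fin n) ℝ) : ℕ :=
  {μ : ℝ | Module.finrank ℝ (LinearMap.ker (Matrix.toLin' (A - μ • 1))) = 2}.ncard

abbrev PhaseSpace (n : ℕ) := (Fin n → ℝ) × (Fin n → ℝ)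

open Fin.NatCast in
theorem Fin.forall_of_imp_add_one {n : ℕ} [NeZero n] {P : Fin n → Prop} {m₀ : Fin n}
    (h₀ : P m₀) (hstep : ∀ m, P m → P (m + 1)) (m : Fin n) : P m := by
  have key : ∀ k : ℕ, P (m₀ + (k : Fin n)) := by
    intro k
    induction k with
    | zero => simpa using h₀
    | succ k ih => simpa [add_assoc] using hstep _ ih
  simpa using key (m - m₀).val

theorem Fin.sum_apply_add_one {n : ℕ} [NeZero n] {M : Type*} [AddCommMonoid M] (f : Fin n → M) :
    ∑ i, f (i + 1) = ∑ i, f i :=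
  Equiv.sum_comp (Equiv.addRight 1) f

theorem Fin.sum_apply_sub_one {n : ℕ} [NeZero n] {M : Type*} [AddCommMonoid M] (f : Fin n → M) :
    ∑ i, f (i - 1) = ∑ i, f i :=
  Equiv.sum_comp (Equiv.subRight 1) f

section Lax

variable {n : ℕ} [NeZero n]

theorem Lax_mulVec_apply (z : PhaseSpace n) (x : Fin n → ℝ) (m : Fin n) :
    (Lax z *ᵥ x) m = z.2 m * x m + bfun z m * x (m + 1) + bfun z (m - 1) * x (m - 1) := by
  have hprev : ∀ s : Fin n, (s + 1 = m) = (s = m - 1) := fun s => propext eq_sub_iff_add_eq.symm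
  simp [Matrix.mulVec, dotProduct, Lax, add_mul, Finset.sum_add_distrib, ite_mul, hprev]

/-- Phase-space functions linear in the entries `p_r`, `b_r` of the Lax matrix. -/
noncomputable def laxLinear (A B : Fin n → ℝ) (y : PhaseSpace n) : ℝ :=
  ∑ r, (A r * y.2 r + B r * bfun y r)

theorem dotProduct_Lax_mulVec (a c : Fin n → ℝ) (y : PhaseSpace n) :
    a ⬝ᵥ (Lax y *ᵥ c) =
      laxLinear (fun r => a r * c r) (fun r => a r * c (r + 1) + a (r + 1) * c r) y := by
  have hshift : ∑ r, a r * c (r - 1) * bfun y (r - 1) = ∑ r, a (r + 1) * c r * bfun y r := by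
    rw [← Fin.sum_apply_sub_one fun r => a (r + 1) * c r * bfun y r]
    simp only [sub_add_cancel]
  calc a ⬝ᵥ (Lax y *ᵥ c)
      = ∑ r, (a r * c r * y.2 r + a r * c (r + 1) * bfun y r) +
          ∑ r, a r * c (r - 1) * bfun y (r - 1) := by
        simp only [dotProduct, Lax_mulVec_apply, ← Finset.sum_add_distrib]
        exact Finset.sum_congr rfl fun r _ => by ring
    _ = _ := by
        rw [hshift, laxLinear, ← Finset.sum_add_distrib]
        exact Finset.sum_congr rfl fun r _ => by ring

theorem fderiv_laxLinear_apply (A B : Fin n → ℝ) (z w : PhaseSpace n) :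
    fderiv ℝ (laxLinear A B) z w =
      ∑ r, (A r * w.2 r + B r * bfun z r * ((w.1 r - w.1 (r + 1)) / 2)) := by
  have hq (r : Fin n) := (hasFDerivAt_apply r z.1).comp z (hasFDerivAt_fst (p := z) (𝕜 := ℝ))
  have hp (r : Fin n) := (hasFDerivAt_apply r z.2).comp z (hasFDerivAt_snd (p := z) (𝕜 := ℝ))
  have hD := HasFDerivAt.fun_sum (u := Finset.univ) fun r _ =>
    ((hp r).const_mul (A r)).add
      ((((hq r).sub (hq (r + 1))).mul_const (2⁻¹ : ℝ)).exp.const_mul (B r))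
  rw [HasFDerivAt.fderiv (f := laxLinear A B) hD]
  simp only [_root_.sum_apply, _root_.add_apply, _root_.smul_apply, _root_.sub_apply,
    ContinuousLinearMap.comp_apply, ContinuousLinearMap.coe_fst', ContinuousLinearMap.coe_snd',
    ContinuousLinearMap.proj_apply,
    Pi.sub_apply, Function.comp_apply, smul_eq_mul, bfun, div_eq_mul_inv]
  exact Finset.sum_congr rfl fun r _ => by ring

theorem fderiv_laxLinear_q (A B : Fin n → ℝ) (z : PhaseSpace n) (j : Fin n) :
    fderiv ℝ (laxLinear A B) z (Pi.single j 1, 0) =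
      (B j * bfun z j - B (j - 1) * bfun z (j - 1)) / 2 := by
  have hprev : ∀ r : Fin n, (r + 1 = j) = (r = j - 1) := fun r => propext eq_sub_iff_add_eq.symm
  simp [fderiv_laxLinear_apply, Pi.single_apply, hprev, mul_sub, sub_div, Finset.sum_sub_distrib,
    ite_div]
  ring

theorem fderiv_laxLinear_p (A B : Fin n → ℝ) (z : PhaseSpace n) (j : Fin n) :
    fderiv ℝ (laxLinear A B) z (0, Pi.single j 1) = A j := by
  simp [fderiv_laxLinear_apply, Pi.single_apply]

theorem pb_laxLinear (A B A' B' : Fin n → ℝ) (z : PhaseSpace n) :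
    pb (laxLinear A B) (laxLinear A' B') z =
      (1 / 2) * ∑ j, bfun z j * (B j * (A' j - A' (j + 1)) - B' j * (A j - A (j + 1))) := by
  set φ : Fin n → ℝ := fun m => (B m * A' m - B' m * A m) * bfun z m
  set ψ : Fin n → ℝ := fun m => (B m * A' (m + 1) - B' m * A (m + 1)) * bfun z m
  calc pb (laxLinear A B) (laxLinear A' B') z = (1 / 2) * ∑ j, (φ j - ψ (j - 1)) := by
        simp only [pb, fderiv_laxLinear_q, fderiv_laxLinear_p, Finset.mul_sum, φ, ψ,
          sub_add_cancel]
        exact Finset.sum_congr rfl fun j _ => by ring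
    _ = (1 / 2) * ∑ j, (φ j - ψ j) := by
        rw [Finset.sum_sub_distrib, Fin.sum_apply_sub_one, Finset.sum_sub_distrib]
    _ = _ := by
        simp only [Finset.mul_sum, φ, ψ]
        exact Finset.sum_congr rfl fun j _ => by ring

end Lax

section Wronskian

variable {n : ℕ} [NeZero n] {z : PhaseSpace n} {lam : ℝ} {u v w : Fin n → ℝ}

noncomputable def wronskian (z : PhaseSpace n) (u v : Fin n → ℝ) (m : Fin n) : ℝ :=
  bfun z m * (u (m + 1) * v m - u m * v (m + 1))

theorem Lax_recurrence_of_mulVec_eq_smul (hu : Lax z *ᵥ u = lam • u) (m : Fin n) :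
    z.2 m * u m + bfun z m * u (m + 1) + bfun z (m - 1) * u (m - 1) = lam * u m := by
  simpa [Lax_mulVec_apply] using congrFun hu m

theorem wronskian_add_one (hu : Lax z *ᵥ u = lam • u) (hv : Lax z *ᵥ v = lam • v)
    (m : Fin n) : wronskian z u v (m + 1) = wronskian z u v m := by
  have hu' := Lax_recurrence_of_mulVec_eq_smul hu (m + 1)
  have hv' := Lax_recurrence_of_mulVec_eq_smul hv (m + 1)
  rw [add_sub_cancel_right] at hu' hv'
  unfold wronskian
  linear_combination v (m + 1) * hu' - u (m + 1) * hv'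

theorem wronskian_eq_wronskian (hu : Lax z *ᵥ u = lam • u) (hv : Lax z *ᵥ v = lam • v)
    (m m' : Fin n) : wronskian z u v m = wronskian z u v m' :=
  Fin.forall_of_imp_add_one (P := fun k => wronskian z u v k = wronskian z u v m') rfl
    (fun k hk => (wronskian_add_one hu hv k).trans hk) m

theorem Lax_eigenvector_eq_zero_of_consecutive_zeros (hw : Lax z *ᵥ w = lam • w) {m₀ : Fin n}
    (h₀ : w m₀ = 0) (h₁ : w (m₀ + 1) = 0) : w = 0 := by
  have key : ∀ m, w m = 0 ∧ w (m + 1) = 0 := by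
    refine Fin.forall_of_imp_add_one ⟨h₀, h₁⟩ fun m ⟨hm, hm₁⟩ => ⟨hm₁, ?_⟩
    have hrec := Lax_recurrence_of_mulVec_eq_smul hw (m + 1)
    rw [add_sub_cancel_right, hm, hm₁] at hrec
    have hb : bfun z (m + 1) ≠ 0 := (Real.exp_pos _).ne'
    simpa [hb] using hrec
  exact funext fun m => (key m).1

theorem smul_eq_smul_of_wronskian_eq_zero (hu : Lax z *ᵥ u = lam • u)
    (hv : Lax z *ᵥ v = lam • v) {m : Fin n} (h : wronskian z u v m = 0) :
    u m • v = v m • u := by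
  have hw : Lax z *ᵥ (u m • v - v m • u) = lam • (u m • v - v m • u) := by
    rw [mulVec_sub, mulVec_smul, mulVec_smul, hu, hv, smul_sub, smul_comm lam (u m),
      smul_comm lam (v m)]
  have hb : bfun z m ≠ 0 := (Real.exp_pos _).ne'
  have h₁ : u (m + 1) * v m - u m * v (m + 1) = 0 := by simpa [wronskian, hb] using h
  refine sub_eq_zero.mp (Lax_eigenvector_eq_zero_of_consecutive_zeros hw (m₀ := m) ?_ ?_)
  · simp [mul_comm]
  · simp only [Pi.sub_apply, Pi.smul_apply, smul_eq_mul]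
    linear_combination -h₁

theorem wronskian_ne_zero (hu : Lax z *ᵥ u = lam • u) (hv : Lax z *ᵥ v = lam • v)
    (huu : u ⬝ᵥ u = 1) (hvv : v ⬝ᵥ v = 1) (huv : u ⬝ᵥ v = 0) (m : Fin n) :
    wronskian z u v m ≠ 0 := by
  intro h
  have hv₀ : v = 0 := funext fun k => by
    have hk := congrArg (u ⬝ᵥ ·)
      (smul_eq_smul_of_wronskian_eq_zero hu hv ((wronskian_eq_wronskian hu hv k m).trans h))
    simpa [dotProduct_smul, huu, huv] using hk.symm
  simp [hv₀] at hvv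

theorem pb_half_sub_dotProduct_Lax_mulVec (u v : Fin n → ℝ) (z : PhaseSpace n) :
    pb (fun y => (1 / 2) * (u ⬝ᵥ (Lax y *ᵥ u) - v ⬝ᵥ (Lax y *ᵥ v)))
        (fun y => v ⬝ᵥ (Lax y *ᵥ u)) z =
      (1 / 4) * ∑ j, wronskian z u v j *
        (u j * u j + u (j + 1) * u (j + 1) + v j * v j + v (j + 1) * v (j + 1)) := by
  have hξ : (fun y => (1 / 2) * (u ⬝ᵥ (Lax y *ᵥ u) - v ⬝ᵥ (Lax y *ᵥ v))) =
      laxLinear (fun r => (u r * u r - v r * v r) / 2)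
        (fun r => u r * u (r + 1) - v r * v (r + 1)) :=
    funext fun y => by
      simp only [dotProduct_Lax_mulVec, laxLinear, ← Finset.sum_sub_distrib, Finset.mul_sum]
      exact Finset.sum_congr rfl fun r _ => by ring
  have hη : (fun y => v ⬝ᵥ (Lax y *ᵥ u)) =
      laxLinear (fun r => v r * u r) (fun r => v r * u (r + 1) + v (r + 1) * u r) :=
    funext fun y => dotProduct_Lax_mulVec v u y
  rw [hξ, hη, pb_laxLinear, Finset.mul_sum, Finset.mul_sum]
  exact Finset.sum_congr rfl fun j _ => by rw [wronskian]; ring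

end Wronskian

theorem stmt17_general (n : ℕ) [NeZero n] (z : (Fin n → ℝ) × (Fin n → ℝ))
    (lam : ℝ) (u v : Fin n → ℝ)
    (hu : Lax z *ᵥ u = lam • u) (hv : Lax z *ᵥ v = lam • v)
    (huu : u ⬝ᵥ u = 1) (hvv : v ⬝ᵥ v = 1) (huv : u ⬝ᵥ v = 0) :
    pb (fun y => (1 / 2) * (u ⬝ᵥ (Lax y *ᵥ u) - v ⬝ᵥ (Lax y *ᵥ v)))
        (fun y => v ⬝ᵥ (Lax y *ᵥ u)) z =
      (1 / n) * ∑ m : Fin n, bfun z m * (u (m + 1) * v m - u m * v (m + 1)) ∧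
    (1 / n) * ∑ m : Fin n, bfun z m * (u (m + 1) * v m - u m * v (m + 1)) ≠ 0 := by
  have hW (m : Fin n) : wronskian z u v m = wronskian z u v 0 := wronskian_eq_wronskian hu hv m 0
  have hmean : (1 / n : ℝ) * ∑ m, wronskian z u v m = wronskian z u v 0 := by
    simp [hW, NeZero.ne n]
  have hnorm : ∑ j : Fin n,
      (u j * u j + u (j + 1) * u (j + 1) + v j * v j + v (j + 1) * v (j + 1)) = 4 := by
    simp only [Finset.sum_add_distrib, Fin.sum_apply_add_one fun j => u j * u j,
      Fin.sum_apply_add_one fun j => v j * v j]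
    rw [show ∑ j, u j * u j = 1 from huu, show ∑ j, v j * v j = 1 from hvv]
    norm_num
  change _ = (1 / n : ℝ) * ∑ m, wronskian z u v m ∧
    (1 / n : ℝ) * ∑ m, wronskian z u v m ≠ 0
  rw [hmean, pb_half_sub_dotProduct_Lax_mulVec]
  refine ⟨?_, wronskian_ne_zero hu hv huu hvv huv 0⟩
  simp only [hW, ← Finset.mul_sum, hnorm]
  ring

/-- {ξ,η}(z_*) = (1/n) Σ_m b_m (u_{m+1}v_m − u_m v_{m+1}) ≠ 0 for
ξ = ½(uᵀLu − vᵀLv), η = vᵀLu. -/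
theorem stmt17 (n : ℕ) [NeZero n] (hn : 2 ≤ n) (z : (Fin n → ℝ) × (Fin n → ℝ))
    (lam : ℝ) (u v : Fin n → ℝ)
    (hu : Lax z *ᵥ u = lam • u) (hv : Lax z *ᵥ v = lam • v)
    (huu : u ⬝ᵥ u = 1) (hvv : v ⬝ᵥ v = 1) (huv : u ⬝ᵥ v = 0) :
    pb (fun y => (1 / 2) * (u ⬝ᵥ (Lax y *ᵥ u) - v ⬝ᵥ (Lax y *ᵥ v)))
        (fun y => v ⬝ᵥ (Lax y *ᵥ u)) z =
      (1 / n) * ∑ m : Fin n, bfun z m * (u (m + 1) * v m - u m * v (m + 1)) ∧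
    (1 / n) * ∑ m : Fin n, bfun z m * (u (m + 1) * v m - u m * v (m + 1)) ≠ 0 :=
  stmt17_general n z lam u v hu hv huu hvv huv
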